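/- Let N ≥ 3 be an integer and let G_{N,r} be the spider web graph with r rings. For every integer k with 2 ≤ k ≤ r there exists a ring partition S_1, ..., S_k of the vertex set of G_{N,r} into k parts such that max_{1 ≤ i ≤ k} Cut(S_i)/Volume(S_i) ≤ 1/(2⌊r/k⌋), where ⌊r/k⌋ denotes integer division. Consequently the ring Cheeger constant ψ_{N,r}(k), the minimum of this maximum over all ring partitions into k parts, satisfies ψ_{N,r}(k) ≤ 1/(2⌊r/k⌋). -/

import Mathlib

/-- The spider web graph `G_{N,r}`: the simple graph on vertex set `ZMod N × Fin r` in which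
`(i,j)` and `(i',j')` are adjacent iff (`j = j'` and `i' = i ± 1 mod N`) or (`i = i'` and
`|j - j'| = 1`); realized as the box (Cartesian) product of the cycle graph on `ZMod N`
(the circulant graph with jump `1`) with the path graph on `Fin r`. -/
def spiderWeb (N r : ℕ) : SimpleGraph (ZMod N × Fin r) :=
  SimpleGraph.boxProd (SimpleGraph.circulantGraph {(1 : ZMod N)}) (SimpleGraph.pathGraph r)

/-- `cut G S`: the number of edges of `G` with exactly one endpoint in `S`, counted as the
number of ordered pairs `(u, v)` with `u ∈ S`, `v ∉ S` and `u ~ v` (each such edge is counted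
exactly once this way). -/
noncomputable def cut {V : Type*} (G : SimpleGraph V) (S : Set V) : ℕ :=
  Set.ncard {p : V × V | p.1 ∈ S ∧ p.2 ∉ S ∧ G.Adj p.1 p.2}

/-- `volume G S`: the sum of the degrees of the vertices in `S`, counted as the number of
ordered pairs `(u, v)` with `u ∈ S` and `u ~ v`. -/
noncomputable def volume {V : Type*} (G : SimpleGraph V) (S : Set V) : ℕ :=
  Set.ncard {p : V × V | p.1 ∈ S ∧ G.Adj p.1 p.2}

/-- `I ⊆ ZMod N` is an arc of cardinality `c`: `I = {a, a+1, ..., a+c-1}` (mod `N`). -/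
def IsArc (N : ℕ) (I : Set (ZMod N)) (c : ℕ) : Prop :=
  ∃ a : ZMod N, I = (fun t : ℕ => a + (t : ZMod N)) '' Set.Iio c

/-- A wedge partition of the vertex set of the spider web graph `G_{N,r}` into `k` parts:
the parts are `A 1 × Fin r, ..., A k × Fin r` where the `A i` are pairwise disjoint
nonempty arcs of `ZMod N` whose union is all of `ZMod N`. -/
def IsWedgePartition (N r k : ℕ) (S : Fin k → Set (ZMod N × Fin r)) : Prop :=
  ∃ A : Fin k → Set (ZMod N),
    (∀ i, ∃ c, 1 ≤ c ∧ IsArc N (A i) c) ∧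
    Pairwise (Function.onFun Disjoint A) ∧
    (⋃ i, A i) = Set.univ ∧
    ∀ i, S i = A i ×ˢ (Set.univ : Set (Fin r))

/-- `B ⊆ Fin r` is an interval: a set of consecutive integers `{a, a+1, ..., b}` with
`a ≤ b < r` (in particular, it is nonempty). -/
def IsInterval (r : ℕ) (B : Set (Fin r)) : Prop :=
  ∃ a b : ℕ, a ≤ b ∧ b < r ∧ B = {j : Fin r | a ≤ (j : ℕ) ∧ (j : ℕ) ≤ b}

/-- A ring partition of the vertex set of the spider web graph `G_{N,r}` into `k` parts:
the parts are `ZMod N × B 1, ..., ZMod N × B k` where the `B i` are pairwise disjoint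
nonempty intervals of `Fin r` whose union is all of `Fin r`. -/
def IsRingPartition (N r k : ℕ) (S : Fin k → Set (ZMod N × Fin r)) : Prop :=
  ∃ B : Fin k → Set (Fin r),
    (∀ i, IsInterval r (B i)) ∧
    Pairwise (Function.onFun Disjoint B) ∧
    (⋃ i, B i) = Set.univ ∧
    ∀ i, S i = (Set.univ : Set (ZMod N)) ×ˢ B i

/-- The wedge Cheeger constant `φ_{N,r}(k)`: the minimum over all wedge partitions
`S 1, ..., S k` of `G_{N,r}` of `max_i Cut(S i)/Volume(S i)`. -/
noncomputable def wedgeCheeger (N r k : ℕ) : ℝ :=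
  sInf {x : ℝ | ∃ S : Fin k → Set (ZMod N × Fin r), IsWedgePartition N r k S ∧
    x = ⨆ i, (cut (spiderWeb N r) (S i) : ℝ) / (volume (spiderWeb N r) (S i) : ℝ)}

/-- The ring Cheeger constant `ψ_{N,r}(k)`: the minimum over all ring partitions
`S 1, ..., S k` of `G_{N,r}` of `max_i Cut(S i)/Volume(S i)`. -/
noncomputable def ringCheeger (N r k : ℕ) : ℝ :=
  sInf {x : ℝ | ∃ S : Fin k → Set (ZMod N × Fin r), IsRingPartition N r k S ∧
    x = ⨆ i, (cut (spiderWeb N r) (S i) : ℝ) / (volume (spiderWeb N r) (S i) : ℝ)}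


/-!
Cut the rings into `k` consecutive blocks of `q = ⌊r/k⌋` rings each, the last block absorbing
the remainder. For a block `B` of `L ≥ q` rings and `S = ZMod N × B`, every edge leaving `S` is
a path edge, so `Cut(S) = N · Cut_P(B) ≤ 2N`, while every vertex has its two cycle neighbours,
so `Vol(S) = 2N·L + N · Vol_P(B)`, and `Vol_P(B) ≥ Cut_P(B) + 2(L - 1)` counts the path edges
inside `B` in both directions. Hence `Cut(S) · 2q ≤ Vol(S)` in each of the cases
`Cut_P(B) = 0, 1, 2`.
-/

open SimpleGraph Set

section CutVolume
variable {V W : Type*} (G : SimpleGraph V) (H : SimpleGraph W)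

lemma volume_eq_cut_add_ncard [Finite V] (S : Set V) :
    volume G S = cut G S + {p : V × V | p.1 ∈ S ∧ p.2 ∈ S ∧ G.Adj p.1 p.2}.ncard := by
  rw [volume, cut, ← ncard_union_eq]
  · congr 1
    ext p
    simp only [mem_ofPred_eq, mem_union]
    tauto
  · exact disjoint_left.mpr fun p h₁ h₂ => h₁.2.1 h₂.2.1

lemma volume_eq_sum_degree [Fintype V] [DecidableRel G.Adj] (S : Finset V) :
    volume G S = ∑ v ∈ S, G.degree v := by
  have : {p : V × V | p.1 ∈ (S : Set V) ∧ G.Adj p.1 p.2} =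
      ↑((S ×ˢ Finset.univ).filter fun p => G.Adj p.1 p.2) := by
    ext p
    simp
  rw [volume, this, ncard_coe_finset, Finset.card_filter, Finset.sum_product]
  refine Finset.sum_congr rfl fun v _ => ?_
  rw [← card_neighborFinset_eq_degree, neighborFinset_eq_filter, Finset.card_filter]

lemma volume_boxProd_prod [Finite V] [Finite W] (A : Set V) (B : Set W) :
    volume (G □ H) (A ×ˢ B) = volume G A * B.ncard + A.ncard * volume H B := by
  classical
  have := Fintype.ofFinite V
  have := Fintype.ofFinite W
  rw [← A.coe_toFinset, ← B.coe_toFinset, ← Finset.coe_product, volume_eq_sum_degree,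
    volume_eq_sum_degree, volume_eq_sum_degree, ncard_coe_finset, ncard_coe_finset]
  calc _ = ∑ p ∈ A.toFinset ×ˢ B.toFinset, (G.degree p.1 + H.degree p.2) :=
        Finset.sum_congr rfl fun p _ => by convert degree_boxProd p
    _ = ∑ x ∈ A.toFinset, ∑ y ∈ B.toFinset, (G.degree x + H.degree y) :=
        Finset.sum_product' _ _ fun x y => G.degree x + H.degree y
    _ = _ := by
      simp only [Finset.sum_add_distrib, Finset.sum_const, smul_eq_mul, Finset.mul_sum, mul_comm]

lemma cut_boxProd_univ_prod (B : Set W) :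
    cut (G □ H) (univ ×ˢ B) = Nat.card V * cut H B := by
  have : {p : (V × W) × (V × W) | p.1 ∈ univ ×ˢ B ∧ p.2 ∉ univ ×ˢ B ∧ (G □ H).Adj p.1 p.2} =
      (fun x : V × (W × W) => ((x.1, x.2.1), (x.1, x.2.2))) ''
        (univ ×ˢ {p : W × W | p.1 ∈ B ∧ p.2 ∉ B ∧ H.Adj p.1 p.2}) := by
    ext ⟨⟨x, j⟩, ⟨x', j'⟩⟩
    simp only [mem_ofPred_eq, mem_prod, mem_univ, true_and, boxProd_adj, mem_image,
      Prod.mk.injEq]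
    constructor
    · rintro ⟨hj, hj', ⟨-, rfl⟩ | ⟨hH, rfl⟩⟩
      · exact absurd hj hj'
      · exact ⟨(x, j, j'), ⟨hj, hj', hH⟩, ⟨rfl, rfl⟩, rfl, rfl⟩
    · rintro ⟨⟨y, i, i'⟩, ⟨hi, hi', hH⟩, ⟨rfl, rfl⟩, rfl, rfl⟩
      exact ⟨hi, hi', Or.inr ⟨hH, rfl⟩⟩
  rw [cut, cut, this, ncard_image_of_injective, ncard_prod, ncard_univ]
  rintro ⟨x, j, j'⟩ ⟨y, i, i'⟩ h
  simp only [Prod.mk.injEq] at h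
  obtain ⟨⟨rfl, rfl⟩, -, rfl⟩ := h
  rfl

end CutVolume

lemma volume_circulantGraph_univ {N : ℕ} (hN : 3 ≤ N) :
    volume (circulantGraph {(1 : ZMod N)}) univ = 2 * N := by
  obtain ⟨n, rfl⟩ : ∃ n, N = n + 3 := ⟨N - 3, by omega⟩
  change volume (circulantGraph {(1 : Fin (n + 3))}) univ = 2 * (n + 3)
  rw [← cycleGraph_eq_circulantGraph, ← Finset.coe_univ, volume_eq_sum_degree]
  simp [cycleGraph_degree_three_le, mul_comm]

section PathGraph
variable {r : ℕ}

lemma ncard_fin_val_preimage_Icc {a b : ℕ} (hb : b < r) :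
    (Fin.val ⁻¹' Icc a b : Set (Fin r)).ncard = b + 1 - a := by
  rw [← ncard_Icc_nat, ← ncard_image_of_injective _ Fin.val_injective,
    image_preimage_eq_of_subset]
  intro n hn
  exact ⟨⟨n, hn.2.trans_lt hb⟩, rfl⟩

lemma cut_pathGraph_fin_val_preimage_Icc_le_two (a b : ℕ) :
    cut (pathGraph r) (Fin.val ⁻¹' Icc a b) ≤ 2 := by
  have hval : (Prod.map Fin.val Fin.val : Fin r × Fin r → ℕ × ℕ).Injective :=
    Fin.val_injective.prodMap Fin.val_injective
  rw [cut, ← ncard_image_of_injective _ hval]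
  calc _ ≤ ({(a, a - 1), (b, b + 1)} : Set (ℕ × ℕ)).ncard := by
        refine ncard_le_ncard ?_ (toFinite _)
        rintro _ ⟨⟨u, v⟩, ⟨hu, hv, huv⟩, rfl⟩
        simp only [mem_preimage, mem_Icc, pathGraph_adj] at hu hv huv
        simp only [Prod.map, mem_insert_iff, mem_singleton_iff, Prod.mk.injEq]
        omega
    _ ≤ 2 := (ncard_insert_le _ _).trans (by rw [ncard_singleton])

lemma two_mul_le_ncard_adj_pathGraph_fin_val_preimage_Icc {a b : ℕ} (hb : b < r) :
    2 * (b - a) ≤ {p : Fin r × Fin r | p.1 ∈ Fin.val ⁻¹' Icc a b ∧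
      p.2 ∈ Fin.val ⁻¹' Icc a b ∧ (pathGraph r).Adj p.1 p.2}.ncard := by
  have hval : (Prod.map Fin.val Fin.val : Fin r × Fin r → ℕ × ℕ).Injective :=
    Fin.val_injective.prodMap Fin.val_injective
  have hup : (fun i : ℕ => (i, i + 1)).Injective := fun i i' h => (Prod.mk.inj h).1
  have hdown : (fun i : ℕ => (i + 1, i)).Injective := fun i i' h => (Prod.mk.inj h).2
  rw [← ncard_image_of_injective _ hval]
  calc 2 * (b - a)
      = ((fun i => (i, i + 1)) '' Ico a b ∪ (fun i => (i + 1, i)) '' Ico a b).ncard := by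
        rw [ncard_union_eq, ncard_image_of_injective _ hup, ncard_image_of_injective _ hdown,
          ncard_Ico_nat, two_mul]
        refine disjoint_left.mpr ?_
        rintro _ ⟨i, -, rfl⟩ ⟨i', -, h⟩
        simp only [Prod.mk.injEq] at h
        omega
    _ ≤ _ := by
        refine ncard_le_ncard ?_ (toFinite _)
        rintro _ (⟨i, hi, rfl⟩ | ⟨i, hi, rfl⟩) <;> rw [mem_Ico] at hi
        · exact ⟨(⟨i, by omega⟩, ⟨i + 1, by omega⟩), by simp [pathGraph_adj]; omega, rfl⟩
        · exact ⟨(⟨i + 1, by omega⟩, ⟨i, by omega⟩), by simp [pathGraph_adj]; omega, rfl⟩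

end PathGraph

lemma cut_mul_le_volume_spiderWeb {N r a b q : ℕ} (hN : 3 ≤ N) (hb : b < r)
    (hq : q ≤ b + 1 - a) :
    cut (spiderWeb N r) (univ ×ˢ (Fin.val ⁻¹' Icc a b)) * (2 * q) ≤
      volume (spiderWeb N r) (univ ×ˢ (Fin.val ⁻¹' Icc a b)) := by
  have : NeZero N := ⟨by omega⟩
  have hvol := volume_eq_cut_add_ncard (pathGraph r) (Fin.val ⁻¹' Icc a b)
  have hinner := two_mul_le_ncard_adj_pathGraph_fin_val_preimage_Icc (a := a) hb
  have hcut := cut_pathGraph_fin_val_preimage_Icc_le_two (r := r) a b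
  rw [spiderWeb, cut_boxProd_univ_prod, volume_boxProd_prod, volume_circulantGraph_univ hN,
    ncard_univ, Nat.card_zmod, ncard_fin_val_preimage_Icc hb]
  generalize cut (pathGraph r) (Fin.val ⁻¹' Icc a b) = c at *
  have key : c * (2 * q) ≤ 2 * (b + 1 - a) + volume (pathGraph r) (Fin.val ⁻¹' Icc a b) := by
    interval_cases c <;> omega
  calc N * c * (2 * q) = N * (c * (2 * q)) := by ring
    _ ≤ N * (2 * (b + 1 - a) + volume (pathGraph r) (Fin.val ⁻¹' Icc a b)) :=
        Nat.mul_le_mul_left N key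
    _ = _ := by ring

lemma div_le_one_div_of_mul_le {x y c : ℕ} (hc : 0 < c) (h : x * c ≤ y) :
    (x / y : ℝ) ≤ 1 / c := by
  rcases Nat.eq_zero_or_pos y with rfl | hy
  · simp
  rw [div_le_div_iff₀ (by positivity) (by positivity), one_mul]
  exact_mod_cast h

lemma isRingPartition_fibers {N r k : ℕ} (f : Fin r → Fin k)
    (hf : ∀ i, IsInterval r (f ⁻¹' {i})) :
    IsRingPartition N r k fun i => univ ×ˢ (f ⁻¹' {i}) :=
  ⟨fun i => f ⁻¹' {i}, hf, pairwise_disjoint_fiber f,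
    eq_univ_of_forall fun j => mem_iUnion.mpr ⟨f j, rfl⟩, fun _ => rfl⟩

lemma ringCheeger_le_of_isRingPartition {N r k : ℕ} [NeZero k]
    {S : Fin k → Set (ZMod N × Fin r)} {c : ℝ} (hS : IsRingPartition N r k S)
    (h : ∀ i, (cut (spiderWeb N r) (S i) : ℝ) / (volume (spiderWeb N r) (S i) : ℝ) ≤ c) :
    ringCheeger N r k ≤ c := by
  have hbdd : BddBelow {x : ℝ | ∃ S : Fin k → Set (ZMod N × Fin r), IsRingPartition N r k S ∧
      x = ⨆ i, (cut (spiderWeb N r) (S i) : ℝ) / (volume (spiderWeb N r) (S i) : ℝ)} := by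
    refine ⟨0, ?_⟩
    rintro _ ⟨S', -, rfl⟩
    exact Real.iSup_nonneg fun i => by positivity
  exact (csInf_le hbdd ⟨S, hS, rfl⟩).trans (ciSup_le h)

def ringBlockIndex (r k : ℕ) [NeZero k] (j : Fin r) : Fin k :=
  ⟨min (j / (r / k)) (k - 1), (min_le_right _ _).trans_lt (Nat.sub_one_lt (NeZero.ne k))⟩

section RingBlocks
variable {r k : ℕ} [NeZero k]

lemma ringBlockIndex_eq_iff (hkr : k ≤ r) (i : Fin k) (j : Fin r) :
    ringBlockIndex r k j = i ↔ (i : ℕ) * (r / k) ≤ j ∧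
      (j : ℕ) ≤ if (i : ℕ) + 1 = k then r - 1 else ((i : ℕ) + 1) * (r / k) - 1 := by
  have hq : 0 < r / k := Nat.div_pos hkr (NeZero.pos k)
  have hlo := Nat.le_div_iff_mul_le (x := i) (y := j) hq
  have hhi := Nat.div_lt_iff_lt_mul (x := j) (y := i + 1) hq
  have hj := j.isLt
  have hsucc := add_one_mul (i : ℕ) (r / k)
  simp only [Fin.ext_iff, ringBlockIndex]
  split_ifs <;> omega

lemma exists_ringBlockIndex_preimage_eq (hkr : k ≤ r) (i : Fin k) :
    ∃ a b, a ≤ b ∧ b < r ∧ r / k ≤ b + 1 - a ∧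
      ringBlockIndex r k ⁻¹' {i} = Fin.val ⁻¹' Icc a b := by
  have hq : 0 < r / k := Nat.div_pos hkr (NeZero.pos k)
  have hsucc := add_one_mul (i : ℕ) (r / k)
  have hkq : ((i : ℕ) + 1) * (r / k) ≤ r :=
    (Nat.mul_le_mul_right _ i.isLt).trans (Nat.mul_div_le r k)
  refine ⟨_, _, ?_, ?_, ?_, Set.ext fun j => ringBlockIndex_eq_iff hkr i j⟩ <;>
    split_ifs <;> omega

end RingBlocks

/-- For `N ≥ 3` and `2 ≤ k ≤ r`, there is a ring partition
`S 1, ..., S k` of the spider web graph `G_{N,r}` with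
`max_i Cut(S i)/Volume(S i) ≤ 1/(2⌊r/k⌋)`; consequently the ring Cheeger constant
satisfies `ψ_{N,r}(k) ≤ 1/(2⌊r/k⌋)` (`⌊r/k⌋` is integer division). -/
theorem ringCheeger_le (N r k : ℕ) (hN : 3 ≤ N) (hk : 2 ≤ k) (hkr : k ≤ r) :
    (∃ S : Fin k → Set (ZMod N × Fin r), IsRingPartition N r k S ∧
      ∀ i, (cut (spiderWeb N r) (S i) : ℝ) / (volume (spiderWeb N r) (S i) : ℝ)
        ≤ 1 / (2 * ((r / k : ℕ) : ℝ))) ∧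
    ringCheeger N r k ≤ 1 / (2 * ((r / k : ℕ) : ℝ)) := by
  have : NeZero k := ⟨by omega⟩
  have hpart := isRingPartition_fibers (N := N) (ringBlockIndex r k) fun i => by
    obtain ⟨a, b, hab, hb, -, he⟩ := exists_ringBlockIndex_preimage_eq hkr i
    exact ⟨a, b, hab, hb, he⟩
  have hratio : ∀ i, (cut (spiderWeb N r) (univ ×ˢ (ringBlockIndex r k ⁻¹' {i})) : ℝ) /
      (volume (spiderWeb N r) (univ ×ˢ (ringBlockIndex r k ⁻¹' {i})) : ℝ)
        ≤ 1 / (2 * ((r / k : ℕ) : ℝ)) := fun i => by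
    obtain ⟨a, b, -, hb, hq, he⟩ := exists_ringBlockIndex_preimage_eq hkr i
    rw [he]
    exact_mod_cast div_le_one_div_of_mul_le (Nat.mul_pos two_pos (Nat.div_pos hkr (by omega)))
      (cut_mul_le_volume_spiderWeb hN hb hq)
  exact ⟨⟨_, hpart, hratio⟩, ringCheeger_le_of_isRingPartition hpart hratio⟩
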